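/- The topological component χ_z(b) := z(p̄_{(∂₀b,o)} * b * p_{(∂₁b,o)}) of a 1-cocycle z with respect to a path-frame P_o satisfies the 1-cocycle identity χ_z(∂₀c)·χ_z(∂₂c) = χ_z(∂₁c) for all 2-simplices c, and for every loop ℓ based at the pole o one has χ_z(ℓ) = z(ℓ). -/

import Mathlib

/-- A 1-simplex of a poset `K`: two faces and a support dominating both. -/
structure OneSimplex (K : Type*) [PartialOrder K] where
  face0 : K
  face1 : K
  supp : K
  le0 : face0 ≤ supp
  le1 : face1 ≤ supp

/-- The reverse of a 1-simplex: same support, exchanged faces. -/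
def OneSimplex.rev {K : Type*} [PartialOrder K] (b : OneSimplex K) : OneSimplex K :=
  ⟨b.face1, b.face0, b.supp, b.le1, b.le0⟩

/-- The degenerate 1-simplex `σ₀ a` at a 0-simplex `a`. -/
def OneSimplex.degenerate {K : Type*} [PartialOrder K] (a : K) : OneSimplex K :=
  ⟨a, a, a, le_refl a, le_refl a⟩

/-- A 2-simplex of a poset `K`, presented by its three vertices, the supports of its
three faces, and its own support, with all required order relations. Its faces
`∂₀c, ∂₁c, ∂₂c` satisfy the simplicial identities by construction. -/
structure TwoSimplex (K : Type*) [PartialOrder K] where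
  vstart : K
  vmid : K
  vend : K
  s0 : K
  s1 : K
  s2 : K
  supp : K
  hs0 : s0 ≤ supp
  hs1 : s1 ≤ supp
  hs2 : s2 ≤ supp
  h0s : vmid ≤ s0
  h0e : vend ≤ s0
  h1s : vstart ≤ s1
  h1e : vend ≤ s1
  h2s : vstart ≤ s2
  h2e : vmid ≤ s2

/-- The face `∂₀c` (from `vmid` to `vend`). -/
def TwoSimplex.face0 {K : Type*} [PartialOrder K] (c : TwoSimplex K) : OneSimplex K :=
  ⟨c.vend, c.vmid, c.s0, c.h0e, c.h0s⟩

/-- The face `∂₁c` (from `vstart` to `vend`). -/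
def TwoSimplex.face1 {K : Type*} [PartialOrder K] (c : TwoSimplex K) : OneSimplex K :=
  ⟨c.vend, c.vstart, c.s1, c.h1e, c.h1s⟩

/-- The face `∂₂c` (from `vstart` to `vmid`). -/
def TwoSimplex.face2 {K : Type*} [PartialOrder K] (c : TwoSimplex K) : OneSimplex K :=
  ⟨c.vmid, c.vstart, c.s2, c.h2e, c.h2s⟩

/-- A path in the poset `K` from `x` to `y`: a nonempty composable string of
1-simplices, `∂₁` of the first being `x` and `∂₀` of the last being `y`. -/
inductive PPath (K : Type*) [PartialOrder K] : K → K → Type _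
  | single (b : OneSimplex K) : PPath K b.face1 b.face0
  | cons (b : OneSimplex K) {x : K} (p : PPath K x b.face1) : PPath K x b.face0

/-- Composition of paths: `q.comp p` first traverses `p`, then `q`. -/
def PPath.comp {K : Type*} [PartialOrder K] : ∀ {x y w : K}, PPath K y w → PPath K x y → PPath K x w
  | _, _, _, .single b, p => .cons b p
  | _, _, _, .cons b q, p => .cons b (q.comp p)

/-- The reverse of a path. -/
def PPath.rev {K : Type*} [PartialOrder K] : ∀ {x y : K}, PPath K x y → PPath K y x
  | _, _, .single b => .single b.rev
  | _, _, .cons b p => PPath.comp p.rev (.single b.rev)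

/-- Multiplicative extension of a function on 1-simplices to paths:
`z(bₙ * ⋯ * b₁) = z(bₙ) ⋯ z(b₁)`. -/
def PPath.eval {K : Type*} [PartialOrder K] {M : Type*} [Monoid M]
    (z : OneSimplex K → M) : ∀ {x y : K}, PPath K x y → M
  | _, _, .single b => z b
  | _, _, .cons b p => z b * p.eval z

/-- The support of the path is causally disjoint from `o` (every 1-simplex of the path
has support `⊥ o`). -/
def PPath.suppDisjoint {K : Type*} [PartialOrder K] (perp : K → K → Prop) (o : K) :
    ∀ {x y : K}, PPath K x y → Prop
  | _, _, .single b => perp b.supp o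
  | _, _, .cons b p => perp b.supp o ∧ p.suppDisjoint perp o

/-- Homotopy of paths with the same endpoints: the equivalence relation generated by
elementary deformations (replacing `∂₁c` by `∂₀c * ∂₂c` for a 2-simplex `c`), compatible
with composition. -/
inductive PHomotopic {K : Type*} [PartialOrder K] : ∀ {x y : K}, PPath K x y → PPath K x y → Prop
  | refl {x y : K} (p : PPath K x y) : PHomotopic p p
  | symm {x y : K} {p q : PPath K x y} : PHomotopic p q → PHomotopic q p
  | trans {x y : K} {p q r : PPath K x y} : PHomotopic p q → PHomotopic q r → PHomotopic p r
  | deform (c : TwoSimplex K) :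
      PHomotopic (.single c.face1) ((PPath.single c.face0).comp (.single c.face2))
  | comp_congr {x y w : K} {q q' : PPath K y w} {p p' : PPath K x y} :
      PHomotopic q q' → PHomotopic p p' → PHomotopic (q.comp p) (q'.comp p')

/-- The topological component of a 1-cocycle with respect to a path-frame `P` with pole `o`:
`χ_z(b) := z(p̄_{(∂₀b,o)} * b * p_{(∂₁b,o)})`. -/
def topComp {K : Type*} [PartialOrder K] {M : Type*} [Monoid M] {o : K}
    (P : ∀ a : K, PPath K o a) (z : OneSimplex K → M) (b : OneSimplex K) : M :=
  (((P b.face0).rev.comp (PPath.single b)).comp (P b.face1)).eval z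

/-!
Writing `z` also for its multiplicative extension to paths, `χ_z(b) = z(p̄_{∂₀b}) z(b) z(p_{∂₁b})`.
A unitary 1-cocycle takes the value `1` on degenerate simplices (an idempotent unit), hence
`z(b̄) z(b) = 1` and `z(p) z(p̄) = 1` for every path. So the inner frame factors cancel: in
`χ_z(∂₀c) χ_z(∂₂c)` this leaves `z(∂₀c) z(∂₂c) = z(∂₁c)`, and along a loop at `o` it leaves
`z(p̄_o) z(ℓ) z(p_o)`, where `z(p_o) = z(σ₀ o) = 1` by homotopy invariance.
-/

namespace PPath

variable {K : Type*} [PartialOrder K] {M : Type*} [Monoid M] (z : OneSimplex K → M)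

theorem eval_comp : ∀ {x y w : K} (q : PPath K y w) (p : PPath K x y),
    (q.comp p).eval z = q.eval z * p.eval z
  | _, _, _, .single _, _ => rfl
  | _, _, _, .cons b q, p => by
      change z b * (q.comp p).eval z = z b * q.eval z * p.eval z
      rw [eval_comp q p, mul_assoc]

theorem eval_rev_cons (b : OneSimplex K) {x : K} (p : PPath K x b.face1) :
    (cons b p).rev.eval z = p.rev.eval z * z b.rev :=
  eval_comp z p.rev (.single b.rev)

theorem eval_eq_of_homotopic (hzc : ∀ c : TwoSimplex K, z c.face0 * z c.face2 = z c.face1)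
    {x y : K} {p q : PPath K x y} (h : PHomotopic p q) : p.eval z = q.eval z := by
  induction h with
  | refl => rfl
  | symm _ ih => exact ih.symm
  | trans _ _ ih₁ ih₂ => exact ih₁.trans ih₂
  | deform c => exact ((eval_comp z (.single c.face0) (.single c.face2)).trans (hzc c)).symm
  | comp_congr _ _ ih₁ ih₂ => rw [eval_comp, eval_comp, ih₁, ih₂]

variable {z} (hrev : ∀ b : OneSimplex K, z b.rev * z b = 1)
include hrev

theorem eval_rev_mul_eval : ∀ {x y : K} (p : PPath K x y), p.rev.eval z * p.eval z = 1
  | _, _, .single b => hrev b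
  | _, _, .cons b p => by
      change (cons b p).rev.eval z * (z b * p.eval z) = 1
      rw [eval_rev_cons, mul_assoc, ← mul_assoc (z b.rev), hrev, one_mul, eval_rev_mul_eval p]

theorem eval_mul_eval_rev : ∀ {x y : K} (p : PPath K x y), p.eval z * p.rev.eval z = 1
  | _, _, .single b => hrev b.rev
  | _, _, .cons b p => by
      change z b * p.eval z * (cons b p).rev.eval z = 1
      rw [eval_rev_cons, mul_assoc, ← mul_assoc (p.eval z), eval_mul_eval_rev p, one_mul]
      exact hrev b.rev

end PPath

section TopComp

variable {K : Type*} [PartialOrder K] {M : Type*} [Monoid M] {o : K}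
  (P : ∀ a : K, PPath K o a) {z : OneSimplex K → M}

theorem topComp_eq (z : OneSimplex K → M) (b : OneSimplex K) :
    topComp P z b = (P b.face0).rev.eval z * z b * (P b.face1).eval z := by
  rw [topComp, PPath.eval_comp, PPath.eval_comp]
  rfl

theorem topComp_cocycle (hzc : ∀ c : TwoSimplex K, z c.face0 * z c.face2 = z c.face1)
    (hrev : ∀ b : OneSimplex K, z b.rev * z b = 1) (c : TwoSimplex K) :
    topComp P z c.face0 * topComp P z c.face2 = topComp P z c.face1 := by
  rw [topComp_eq, topComp_eq, topComp_eq, ← hzc c]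
  change (P c.vend).rev.eval z * z c.face0 * (P c.vmid).eval z *
      ((P c.vmid).rev.eval z * z c.face2 * (P c.vstart).eval z) =
    (P c.vend).rev.eval z * (z c.face0 * z c.face2) * (P c.vstart).eval z
  simp only [mul_assoc]
  rw [← mul_assoc ((P c.vmid).eval z), PPath.eval_mul_eval_rev hrev, one_mul]

theorem eval_topComp (hrev : ∀ b : OneSimplex K, z b.rev * z b = 1) :
    ∀ {x y : K} (p : PPath K x y),
      p.eval (topComp P z) = (P y).rev.eval z * p.eval z * (P x).eval z
  | _, _, .single b => topComp_eq P z b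
  | _, _, .cons b p => by
      change topComp P z b * p.eval (topComp P z) = _ * (z b * p.eval z) * _
      rw [topComp_eq, eval_topComp hrev p]
      simp only [mul_assoc]
      rw [← mul_assoc ((P b.face1).eval z), PPath.eval_mul_eval_rev hrev, one_mul]

end TopComp

section UnitCocycle

variable {K : Type*} [PartialOrder K] {M : Type*} [Monoid M] {z : OneSimplex K → M}
  (hunit : ∀ b : OneSimplex K, IsUnit (z b))
  (hzc : ∀ c : TwoSimplex K, z c.face0 * z c.face2 = z c.face1)
include hunit hzc

theorem cocycle_degenerate_eq_one (a : K) : z (OneSimplex.degenerate a) = 1 :=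
  (IsIdempotentElem.iff_eq_one_of_isUnit (hunit _)).mp
    (hzc ⟨a, a, a, a, a, a, a, le_rfl, le_rfl, le_rfl, le_rfl, le_rfl, le_rfl, le_rfl,
      le_rfl, le_rfl⟩)

theorem cocycle_rev_mul (b : OneSimplex K) : z b.rev * z b = 1 := by
  -- the 2-simplex with faces `∂₀ = b.rev`, `∂₁ = σ₀ ∂₁b`, `∂₂ = b`
  have h := hzc ⟨b.face1, b.face0, b.face1, b.supp, b.face1, b.supp, b.supp,
    le_rfl, b.le1, le_rfl, b.le0, b.le1, le_rfl, le_rfl, b.le1, b.le0⟩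
  exact h.trans (cocycle_degenerate_eq_one hunit hzc b.face1)

end UnitCocycle

theorem topological_component_cocycle_and_loops {K : Type*} [PartialOrder K]
    {H : Type*} [NormedAddCommGroup H] [InnerProductSpace ℂ H] [CompleteSpace H]
    (o : K) (P : ∀ a : K, PPath K o a)
    (hP : PHomotopic (P o) (PPath.single (OneSimplex.degenerate o)))
    (z : OneSimplex K → (H →L[ℂ] H))
    (hzu : ∀ b : OneSimplex K, z b ∈ unitary (H →L[ℂ] H))
    (hzc : ∀ c : TwoSimplex K, z c.face0 * z c.face2 = z c.face1) :
    (∀ c : TwoSimplex K,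
        topComp P z c.face0 * topComp P z c.face2 = topComp P z c.face1) ∧
    (∀ ℓ : PPath K o o, ℓ.eval (topComp P z) = ℓ.eval z) := by
  have hunit (b : OneSimplex K) : IsUnit (z b) := Unitary.isUnit_coe (U := ⟨z b, hzu b⟩)
  have hrev := cocycle_rev_mul hunit hzc
  have hPo : (P o).eval z = 1 :=
    (PPath.eval_eq_of_homotopic z hzc hP).trans (cocycle_degenerate_eq_one hunit hzc o)
  have hPo_rev : (P o).rev.eval z = 1 := by
    simpa only [hPo, mul_one] using PPath.eval_rev_mul_eval hrev (P o)
  refine ⟨topComp_cocycle P hzc hrev, fun ℓ => ?_⟩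
  rw [eval_topComp P hrev, hPo, hPo_rev, one_mul, mul_one]
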